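/- Preferential propositional dependence logic violates System P: there exists a preferential model W for PDL and PL-formulas φ, ψ, γ (concretely, with N = {p,q}, φ = p, ψ = ¬p, γ = q, and W the model W_pq whose states are all nonempty teams over {p,q} ordered so that the team {v₁,v₃} (where v₁(p)=v₁(q)=1 and v₃(p)=v₃(q)=0) is strictly below the teams {v₁} and {v₂} (where v₂(p)=0, v₂(q)=1), which in turn are strictly below all other teams) such that φ ⊢_W γ and ψ ⊢_W γ but not φ∨ψ ⊢_W γ; hence the rule (Or) fails. -/
import Mathlib


/-- PDL-formulas in negation normal form over variables `V`,
including dependence atoms `dep [a₁,…,a_k] b`. -/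
inductive PDL (V : Type) : Type
  | pos : V → PDL V
  | neg : V → PDL V
  | bot : PDL V
  | top : PDL V
  | dep : List V → V → PDL V
  | conj : PDL V → PDL V → PDL V
  | disj : PDL V → PDL V → PDL V

/-- Team semantics of PDL-formulas: a team is a set of valuations `V → Bool`. -/
def PDL.tsat {V : Type} : PDL V → Set (V → Bool) → Prop
  | .pos p, X => ∀ v ∈ X, v p = true
  | .neg p, X => ∀ v ∈ X, v p = false
  | .bot, X => X = ∅
  | .top, _ => True
  | .dep as b, X => ∀ v ∈ X, ∀ v' ∈ X, (∀ a ∈ as, v a = v' a) → v b = v' b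
  | .conj φ ψ, X => PDL.tsat φ X ∧ PDL.tsat ψ X
  | .disj φ ψ, X => ∃ Y Z : Set (V → Bool), X = Y ∪ Z ∧ PDL.tsat φ Y ∧ PDL.tsat ψ Z

/-- A preferential model for PDL over the variables `V`: a set of states `S`,
a labelling of states by teams, and a smooth strict partial order on states. -/
structure PrefModel (V : Type) where
  S : Type
  label : S → Set (V → Bool)
  lt : S → S → Prop
  irrefl : ∀ s, ¬ lt s s
  trans : ∀ {s t u}, lt s t → lt t u → lt s u
  smooth : ∀ (φ : PDL V) (s : S), PDL.tsat φ (label s) →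
    (∀ s', PDL.tsat φ (label s') → ¬ lt s' s) ∨
      ∃ s', PDL.tsat φ (label s') ∧ (∀ s'', PDL.tsat φ (label s'') → ¬ lt s'' s') ∧ lt s' s

/-- `s` is a `≺`-minimal state among those whose label satisfies `φ`. -/
def PrefModel.minimal {V : Type} (W : PrefModel V) (φ : PDL V) (s : W.S) : Prop :=
  PDL.tsat φ (W.label s) ∧ ∀ s', PDL.tsat φ (W.label s') → ¬ W.lt s' s

/-- Preferential entailment `φ ⊢_W ψ`. -/
def PrefModel.ent {V : Type} (W : PrefModel V) (φ ψ : PDL V) : Prop :=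
  ∀ s, W.minimal φ s → PDL.tsat ψ (W.label s)

/-- `min(⟦φ⟧, ≺)`: the set of teams labelling `≺`-minimal states of `S(φ)`. -/
def PrefModel.minTeams {V : Type} (W : PrefModel V) (φ : PDL V) :
    Set (Set (V → Bool)) :=
  {X | ∃ s, W.minimal φ s ∧ W.label s = X}

/-- The two propositional variables `p` and `q`. -/
inductive Var2 : Type
  | p : Var2
  | q : Var2
deriving DecidableEq

instance : Fintype Var2 := ⟨⟨{Var2.p, Var2.q}, by decide⟩, by intro x; cases x <;> decide⟩

/-- valuation with p=q=true -/
def vv1 : Var2 → Bool := fun _ => true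
/-- valuation with p=false, q=true -/
def vv2 : Var2 → Bool := fun x => match x with | .p => false | .q => true
/-- valuation with p=q=false -/
def vv3 : Var2 → Bool := fun _ => false

def Wlabel : Fin 3 → Set (Var2 → Bool)
  | 0 => {vv1, vv3}
  | 1 => {vv1}
  | 2 => {vv2}

def Wlt (s t : Fin 3) : Prop := s = 0 ∧ (t = 1 ∨ t = 2)

/-- Preferential propositional dependence logic violates System P: there is a
preferential model `W` for PDL over `N = {p, q}` such that `p ⊢_W q` and
`¬p ⊢_W q` but not `p ∨ ¬p ⊢_W q`, i.e. the rule (Or) fails. -/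
theorem PDL_pref_violates_SystemP :
    ∃ W : PrefModel Var2,
      W.ent (.pos .p) (.pos .q) ∧
      W.ent (.neg .p) (.pos .q) ∧
      ¬ W.ent (.disj (.pos .p) (.neg .p)) (.pos .q) := by
  refine ⟨⟨Fin 3, Wlabel, Wlt, ?_, ?_, ?_⟩, ?_, ?_, ?_⟩
  · rintro s ⟨h0, h12⟩
    subst h0; rcases h12 with h | h <;> exact absurd h (by decide)
  · rintro s t u ⟨h0, _⟩ ⟨h0', h12⟩
    exact ⟨h0, h12⟩
  · intro φ s h
    fin_cases s
    · left; rintro s' _ ⟨_, h12⟩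
      rcases h12 with h' | h' <;> exact absurd h' (by decide)
    · by_cases h0 : PDL.tsat φ (Wlabel 0)
      · right
        exact ⟨0, h0, fun s'' _ hl => by rcases hl.2 with h' | h' <;> exact absurd h' (by decide),
          rfl, Or.inl rfl⟩
      · left; rintro s' hs' ⟨h', _⟩
        subst h'; exact h0 hs'
    · by_cases h0 : PDL.tsat φ (Wlabel 0)
      · right
        exact ⟨0, h0, fun s'' _ hl => by rcases hl.2 with h' | h' <;> exact absurd h' (by decide),
          rfl, Or.inr rfl⟩
      · left; rintro s' hs' ⟨h', _⟩
        subst h'; exact h0 hs'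
  · rintro s ⟨hs, -⟩
    fin_cases s
    · exact absurd (hs vv3 (Or.inr rfl)) (by decide)
    · rintro v hv
      rw [Set.mem_singleton_iff.mp hv]; rfl
    · exact absurd (hs vv2 rfl) (by decide)
  · rintro s ⟨hs, -⟩
    fin_cases s
    · exact absurd (hs vv1 (Or.inl rfl)) (by decide)
    · exact absurd (hs vv1 rfl) (by decide)
    · rintro v hv
      rw [Set.mem_singleton_iff.mp hv]; rfl
  · intro hent
    have hdisj : PDL.tsat (.disj (.pos .p) (.neg .p)) (Wlabel 0) := by
      refine ⟨{vv1}, {vv3}, Set.insert_eq _ _, ?_, ?_⟩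
      · rintro v hv; rw [Set.mem_singleton_iff.mp hv]; rfl
      · rintro v hv; rw [Set.mem_singleton_iff.mp hv]; rfl
    have hq := hent 0 ⟨hdisj, fun s' _ hl => by
      rcases hl.2 with h' | h' <;> exact absurd h' (by decide)⟩
    exact absurd (hq vv3 (Or.inr rfl)) (by decide)
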